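/- Let (M,g̃) be a d-dimensional pseudo-Riemannian manifold with d ≥ 2, J a g̃-compatible almost-complex structure that is parallel with respect to the Levi-Civita connection ∇̃ of g̃ (Kähler condition). Let Ω be a smooth nowhere-vanishing function and g := Ω⁻²g̃. Then Z_{ab} := Ω⁻¹ J_{ab} (indices lowered with g) is a conformal Killing-Yano 2-form for g, i.e. ∇_{(a}Z_{b)c} = g_{ab}ξ_c - g_{c(a}ξ_{b)} where ξ_a = -(1/(d-1)) ∇_b Z_a{}^b and ∇ is the Levi-Civita connection of g. -/

import Mathlib

/-!
Under `g̃ = Ω² g` the Kähler condition `∇̃J = 0` determines `∇J` algebraically through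
`Υ = dΩ/Ω`. With `W = J g` (antisymmetric, since `J² = -1` and `J` preserves `g`) and
`w = J Υ` this gives
`Ω ∇_a Z_{bc} = -Υ_a W_{bc} + Υ_b W_{ac} + g_{ab} w_c - g_{ac} w_b - Υ_c W_{ab}`.
Symmetrising in `a, b` cancels every `W`-term, and contracting `b` with `c` gives
`∇_b Z_a{}^b = (1 - d) w_a / Ω` because `tr J = tr (W g⁻¹) = 0`; hence `ξ = w / Ω` and the
conformal Killing–Yano equation follows.
-/

open Matrix

variable {n R : Type*} [Fintype n] [CommRing R]

theorem Matrix.trace_mul_eq_zero_of_transpose_eq_neg [NoZeroDivisors R] [CharZero R]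
    {W H : Matrix n n R} (hW : Wᵀ = -W) (hH : Hᵀ = H) : trace (W * H) = 0 := by
  rw [← CharZero.eq_neg_self_iff]
  calc trace (W * H) = trace (Hᵀ * Wᵀ) := by rw [← transpose_mul, trace_transpose]
    _ = -trace (W * H) := by rw [hW, hH, Matrix.mul_neg, trace_neg, trace_mul_comm]

theorem vecMul_eq_neg_mulVec_of_transpose_eq_neg {W h J : Matrix n n R} (hW : Wᵀ = -W)
    (hWh : W * h = J) (v : n → R) : (h *ᵥ v) ᵥ* W = -(J *ᵥ v) := by
  rw [← mulVec_transpose, hW, mulVec_mulVec, Matrix.neg_mul, hWh, neg_mulVec]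

/-- `Ω ∇_a Z_{bc}`, where `Z = Ω⁻¹ J g`. -/
def conformalKahlerDeriv (g J : Matrix n n R) (Υ : n → R) (a b c : n) : R :=
  -Υ a * (J * g) b c + Υ b * (J * g) a c + g a b * (J *ᵥ Υ) c - g a c * (J *ᵥ Υ) b
    - Υ c * (J * g) a b

theorem conformalKahlerDeriv_add_swap {g J : Matrix n n R} (hg : g.IsSymm)
    (hW : (J * g)ᵀ = -(J * g)) (Υ : n → R) (a b c : n) :
    conformalKahlerDeriv g J Υ a b c + conformalKahlerDeriv g J Υ b a c =
      2 * g a b * (J *ᵥ Υ) c - g c a * (J *ᵥ Υ) b - g c b * (J *ᵥ Υ) a := by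
  have hWba : (J * g) b a = -(J * g) a b := congrFun (congrFun hW a) b
  simp only [conformalKahlerDeriv, hWba, hg.apply a b, hg.apply a c, hg.apply b c]
  ring

theorem sum_sum_mul_mul_eq_mul_mul_transpose (J g : Matrix n n R) (a b : n) :
    ∑ c, ∑ e, J a c * J b e * g c e = (J * g * Jᵀ) a b := by
  simp only [Matrix.mul_apply, transpose_apply, Finset.sum_mul]
  rw [Finset.sum_comm]
  exact Finset.sum_congr rfl fun c _ => Finset.sum_congr rfl fun e _ => by ring

variable [DecidableEq n]

theorem Matrix.transpose_mul_eq_neg_of_mul_self_eq_neg_one {g J : Matrix n n R} (hg : g.IsSymm)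
    (hJ : J * J = -1) (hcompat : J * g * Jᵀ = g) : (J * g)ᵀ = -(J * g) :=
  calc (J * g)ᵀ = -(J * J) * g * Jᵀ := by rw [transpose_mul, hg, hJ, neg_neg, one_mul]
    _ = -(J * g) := by rw [neg_mul, neg_mul, Matrix.mul_assoc J J, Matrix.mul_assoc J, hcompat]

theorem vecMul_mulVec_eq_of_mul_eq_one {g h : Matrix n n R} (hg : g.IsSymm) (hgh : g * h = 1)
    (v : n → R) : (h *ᵥ v) ᵥ* g = v := by
  rw [← mulVec_transpose, hg, mulVec_mulVec, hgh, one_mulVec]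

/-- `K_a{}^b{}_c = ∇̃ - ∇` for `g̃ = Ω² g`, with `h = g⁻¹` and `Υ = dΩ/Ω`. -/
def conformalDifferenceTensor (g h : Matrix n n R) (Υ : n → R) (a b c : n) : R :=
  (if a = b then Υ c else 0) + (if c = b then Υ a else 0) - g a c * (h *ᵥ Υ) b

theorem sum_conformalDifferenceTensor_mul_apply (g h J : Matrix n n R) (Υ : n → R) (a b c : n) :
    ∑ e, conformalDifferenceTensor g h Υ a c e * J b e =
      (if a = c then (J *ᵥ Υ) b else 0) + Υ a * J b c - (h *ᵥ Υ) c * (g * Jᵀ) a b := by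
  simp only [conformalDifferenceTensor, add_mul, sub_mul, ite_mul, zero_mul, Finset.sum_add_distrib,
    Finset.sum_sub_distrib, Finset.sum_ite_eq', Finset.mem_univ, if_true, Finset.sum_ite_irrel,
    Finset.sum_const_zero]
  simp only [mulVec, dotProduct, Matrix.mul_apply, transpose_apply, Finset.mul_sum, Finset.sum_mul]
  simp only [mul_comm, mul_left_comm]

theorem sum_conformalDifferenceTensor_apply_mul (g h J : Matrix n n R) (Υ : n → R) (a b c : n) :
    ∑ e, conformalDifferenceTensor g h Υ a e b * J e c =
      Υ b * J a c + Υ a * J b c - g a b * ((h *ᵥ Υ) ᵥ* J) c := by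
  simp only [conformalDifferenceTensor, add_mul, sub_mul, ite_mul, zero_mul, Finset.sum_add_distrib,
    Finset.sum_sub_distrib, Finset.sum_ite_eq, Finset.mem_univ, if_true]
  simp only [vecMul, dotProduct, Finset.mul_sum]
  ring_nf

theorem covDeriv_eq_of_parallel {g h J : Matrix n n R} {Υ : n → R} {DJ : n → n → n → R}
    (hpar : ∀ a b c, DJ a b c + ∑ e, conformalDifferenceTensor g h Υ a c e * J b e
      - ∑ e, conformalDifferenceTensor g h Υ a e b * J e c = 0) (a b c : n) :
    DJ a b c = Υ b * J a c - g a b * ((h *ᵥ Υ) ᵥ* J) c - (if a = c then (J *ᵥ Υ) b else 0)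
      + (h *ᵥ Υ) c * (g * Jᵀ) a b := by
  linear_combination hpar a b c - sum_conformalDifferenceTensor_mul_apply g h J Υ a b c
    + sum_conformalDifferenceTensor_apply_mul g h J Υ a b c

theorem sum_covDeriv_mul_eq_of_parallel {g h J : Matrix n n R} {Υ : n → R}
    {DJ : n → n → n → R}
    (hg : g.IsSymm) (hgh : g * h = 1) (hW : (J * g)ᵀ = -(J * g))
    (hpar : ∀ a b c, DJ a b c + ∑ e, conformalDifferenceTensor g h Υ a c e * J b e
      - ∑ e, conformalDifferenceTensor g h Υ a e b * J e c = 0) (a b c : n) :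
    ∑ e, DJ a b e * g e c = Υ b * (J * g) a c - g a c * (J *ᵥ Υ) b + g a b * (J *ᵥ Υ) c
      - Υ c * (J * g) a b := by
  have hυ : (h *ᵥ Υ) ᵥ* g = Υ := vecMul_mulVec_eq_of_mul_eq_one hg hgh Υ
  have hw : (h *ᵥ Υ) ᵥ* (J * g) = -(J *ᵥ Υ) :=
    vecMul_eq_neg_mulVec_of_transpose_eq_neg hW (by rw [Matrix.mul_assoc, hgh, Matrix.mul_one]) Υ
  have hgJ : g * Jᵀ = -(J * g) := by rw [← hW, transpose_mul, hg]
  simp only [covDeriv_eq_of_parallel hpar, add_mul, sub_mul, ite_mul, zero_mul,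
    Finset.sum_add_distrib, Finset.sum_sub_distrib, Finset.sum_ite_eq, Finset.mem_univ, if_true]
  have e1 : ∑ x, Υ b * J a x * g x c = Υ b * (J * g) a c := by
    simp only [Matrix.mul_apply, Finset.mul_sum, mul_assoc]
  have e2 : ∑ x, g a b * ((h *ᵥ Υ) ᵥ* J) x * g x c = -(g a b * (J *ᵥ Υ) c) := by
    calc _ = g a b * (((h *ᵥ Υ) ᵥ* J) ᵥ* g) c := by
          simp only [mul_assoc, ← Finset.mul_sum]; rfl
      _ = _ := by rw [vecMul_vecMul, hw, Pi.neg_apply, mul_neg]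
  have e3 : ∑ x, (h *ᵥ Υ) x * (g * Jᵀ) a b * g x c = -(Υ c * (J * g) a b) := by
    calc _ = ((h *ᵥ Υ) ᵥ* g) c * (g * Jᵀ) a b := by
          simp only [vecMul, dotProduct, Finset.sum_mul, mul_right_comm]
      _ = _ := by rw [hυ, hgJ, Matrix.neg_apply, mul_neg]
  rw [e1, e2, e3]
  ring

theorem sum_sum_conformalKahlerDeriv_mul [NoZeroDivisors R] [CharZero R] {g h J : Matrix n n R}
    (hg : g.IsSymm) (hgh : g * h = 1) (hW : (J * g)ᵀ = -(J * g)) (Υ : n → R) (a : n) :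
    ∑ b, ∑ c, conformalKahlerDeriv g J Υ b a c * h c b =
      (1 - Fintype.card n) * (J *ᵥ Υ) a := by
  have hhg : h * g = 1 := mul_eq_one_comm.mp hgh
  have hh : h.IsSymm := by
    rw [← inv_eq_right_inv hgh]; exact hg.inv
  have hJ : J * g * h = J := by rw [Matrix.mul_assoc, hgh, Matrix.mul_one]
  have htr : trace J = 0 := hJ ▸ trace_mul_eq_zero_of_transpose_eq_neg hW hh
  simp only [conformalKahlerDeriv, add_mul, sub_mul, Finset.sum_add_distrib, Finset.sum_sub_distrib]
  set W := J * g
  clear_value W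
  have hWh_mulVec : ∑ b, ∑ c, -Υ b * W a c * h c b = -(J *ᵥ Υ) a := by
    conv_rhs => rw [← hJ]
    simp only [mulVec, dotProduct, Matrix.mul_apply, Finset.sum_mul, ← Finset.sum_neg_distrib]
    exact Finset.sum_congr rfl fun b _ => Finset.sum_congr rfl fun c _ => by ring
  have htrace : ∑ b, ∑ c, Υ a * W b c * h c b = 0 := by
    rw [← mul_zero (Υ a), ← htr]
    conv_rhs => rw [← hJ]
    simp only [trace, diag, Matrix.mul_apply, Finset.mul_sum, mul_assoc]
  have hhg_vecMul : ∑ b, ∑ c, g b a * (J *ᵥ Υ) c * h c b = (J *ᵥ Υ) a := by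
    conv_rhs => rw [← vecMul_one (J *ᵥ Υ), ← hhg]
    simp only [vecMul, dotProduct, Matrix.mul_apply, Finset.mul_sum]
    rw [Finset.sum_comm]
    exact Finset.sum_congr rfl fun b _ => Finset.sum_congr rfl fun c _ => by ring
  have hdim : ∑ b, ∑ c, g b c * (J *ᵥ Υ) a * h c b = Fintype.card n * (J *ᵥ Υ) a := by
    rw [← trace_one, ← hgh]
    simp only [trace, diag, Matrix.mul_apply, Finset.sum_mul]
    exact Finset.sum_congr rfl fun b _ => Finset.sum_congr rfl fun c _ => by ring
  have hhW_vecMul : ∑ b, ∑ c, Υ c * W b a * h c b = -(J *ᵥ Υ) a := by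
    rw [← Pi.neg_apply, ← vecMul_eq_neg_mulVec_of_transpose_eq_neg hW hJ, ← vecMul_transpose,
      hh.eq, vecMul_vecMul]
    simp only [vecMul, dotProduct, Matrix.mul_apply, Finset.mul_sum]
    rw [Finset.sum_comm]
    exact Finset.sum_congr rfl fun b _ => Finset.sum_congr rfl fun c _ => by ring
  rw [hWh_mulVec, htrace, hhg_vecMul, hdim, hhW_vecMul]
  ring

theorem stmt_1_general {d : ℕ} (hd : 2 ≤ d)
    (g gInv : Fin d → Fin d → ℝ)
    (J : Fin d → Fin d → ℝ)            -- J_a{}^b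
    (Ω : ℝ)
    (Υ : Fin d → ℝ)                    -- Υ_a = Ω⁻¹ ∇_a Ω
    (DJ : Fin d → Fin d → Fin d → ℝ)   -- DJ a b c = ∇_a J_b{}^c
    (hgsymm : ∀ a b, g a b = g b a)
    (hginv : ∀ a b, ∑ c, g a c * gInv c b = if a = b then (1:ℝ) else 0)
    (hJ2 : ∀ a b, ∑ c, J a c * J c b = -(if a = b then (1:ℝ) else 0))
    (hcompat : ∀ a b, ∑ c, ∑ e, J a c * J b e * g c e = g a b)
    (K : Fin d → Fin d → Fin d → ℝ)    -- K a b c = K_a{}^b{}_c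
    (hK : ∀ a b c, K a b c =
      (if a = b then Υ c else 0) + (if c = b then Υ a else 0)
        - g a c * ∑ e, gInv b e * Υ e)
    -- Kähler condition: ∇̃_a J_b{}^c = ∇_a J_b{}^c + K_a{}^c{}_e J_b{}^e - K_a{}^e{}_b J_e{}^c = 0
    (hKahler : ∀ a b c,
      DJ a b c + (∑ e, K a c e * J b e) - (∑ e, K a e b * J e c) = 0)
    -- Z_{ab} = Ω⁻¹ J_{ab} and its g-covariant derivative ∇_a Z_{bc}
    (DZ : Fin d → Fin d → Fin d → ℝ)
    (hDZ : ∀ a b c, DZ a b c =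
      Ω⁻¹ * (-(Υ a) * (∑ e, J b e * g e c) + ∑ e, DJ a b e * g e c))
    -- ξ_a = -(1/(d-1)) ∇_b Z_a{}^b
    (ξ : Fin d → ℝ)
    (hξ : ∀ a, ξ a = -(1 / ((d : ℝ) - 1)) * ∑ b, ∑ c, DZ b a c * gInv c b) :
    -- conformal Killing–Yano equation: ∇_{(a}Z_{b)c} = g_{ab} ξ_c - g_{c(a} ξ_{b)}
    ∀ a b c, (DZ a b c + DZ b a c) / 2 =
      g a b * ξ c - (g c a * ξ b + g c b * ξ a) / 2 := by
  have hg : (of g).IsSymm := ext fun a b => hgsymm b a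
  have hgh : of g * of gInv = 1 := ext fun a b => by
    simpa [Matrix.mul_apply, one_apply] using hginv a b
  have hJJ : of J * of J = -1 := ext fun a b => by
    simpa [Matrix.mul_apply, one_apply] using hJ2 a b
  have hJgJ : of J * of g * (of J)ᵀ = of g := ext fun a b =>
    (sum_sum_mul_mul_eq_mul_mul_transpose (of J) (of g) a b).symm.trans (hcompat a b)
  have hW := transpose_mul_eq_neg_of_mul_self_eq_neg_one hg hJJ hJgJ
  obtain rfl : K = conformalDifferenceTensor (of g) (of gInv) Υ := funext₃ hK
  have hDZ' : ∀ a b c, DZ a b c = Ω⁻¹ * conformalKahlerDeriv (of g) (of J) Υ a b c := by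
    intro a b c
    have h := sum_covDeriv_mul_eq_of_parallel hg hgh hW hKahler a b c
    simp only [of_apply] at h
    rw [hDZ, h]
    simp only [conformalKahlerDeriv, Matrix.mul_apply, of_apply]
    ring
  have hξ' : ∀ a, ξ a = Ω⁻¹ * (of J *ᵥ Υ) a := by
    intro a
    have h := sum_sum_conformalKahlerDeriv_mul hg hgh hW Υ a
    simp only [of_apply, Fintype.card_fin] at h
    have hd1 : (d : ℝ) - 1 ≠ 0 := by linarith [show (2 : ℝ) ≤ d from mod_cast hd]
    rw [hξ]
    simp only [hDZ', mul_assoc, ← Finset.mul_sum, h]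
    field_simp
    ring
  intro a b c
  have h := conformalKahlerDeriv_add_swap hg hW Υ a b c
  simp only [of_apply] at h
  rw [hDZ', hDZ', hξ', hξ', hξ']
  linear_combination Ω⁻¹ / 2 * h

/-- If the conformal class of a `d`-dimensional metric `g` contains a
Kähler metric `g̃ = Ω²g` (i.e. the compatible almost-complex structure `J` is parallel
for the Levi-Civita connection of `g̃`), then `Z_{ab} = Ω⁻¹ J_{ab}` is a conformal
Killing-Yano 2-form for `g`.  All fields are represented pointwise by their components;
`DJ a b c = ∇_a J_b{}^c` denotes the Levi-Civita derivative of `J` with respect to `g`,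
and the Kähler condition `∇̃J = 0` is expressed through the standard difference tensor
`K_a{}^b{}_c = δ_a{}^b Υ_c + δ_c{}^b Υ_a - g_{ac} Υ^b` between the two Levi-Civita
connections, with `Υ_a = Ω⁻¹ ∇_a Ω`. -/
theorem stmt_1 {d : ℕ} (hd : 2 ≤ d)
    (g gInv : Fin d → Fin d → ℝ)
    (J : Fin d → Fin d → ℝ)            -- J_a{}^b
    (Ω : ℝ) (hΩ : Ω ≠ 0)
    (Υ : Fin d → ℝ)                    -- Υ_a = Ω⁻¹ ∇_a Ω
    (DJ : Fin d → Fin d → Fin d → ℝ)   -- DJ a b c = ∇_a J_b{}^c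
    (hgsymm : ∀ a b, g a b = g b a)
    (hginv : ∀ a b, ∑ c, g a c * gInv c b = if a = b then (1:ℝ) else 0)
    (hJ2 : ∀ a b, ∑ c, J a c * J c b = -(if a = b then (1:ℝ) else 0))
    (hcompat : ∀ a b, ∑ c, ∑ e, J a c * J b e * g c e = g a b)
    (K : Fin d → Fin d → Fin d → ℝ)    -- K a b c = K_a{}^b{}_c
    (hK : ∀ a b c, K a b c =
      (if a = b then Υ c else 0) + (if c = b then Υ a else 0)
        - g a c * ∑ e, gInv b e * Υ e)
    -- Kähler condition: ∇̃_a J_b{}^c = ∇_a J_b{}^c + K_a{}^c{}_e J_b{}^e - K_a{}^e{}_b J_e{}^c = 0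
    (hKahler : ∀ a b c,
      DJ a b c + (∑ e, K a c e * J b e) - (∑ e, K a e b * J e c) = 0)
    -- Z_{ab} = Ω⁻¹ J_{ab} and its g-covariant derivative ∇_a Z_{bc}
    (Zlow : Fin d → Fin d → ℝ)
    (hZ : ∀ a b, Zlow a b = Ω⁻¹ * ∑ c, J a c * g c b)
    (DZ : Fin d → Fin d → Fin d → ℝ)
    (hDZ : ∀ a b c, DZ a b c =
      Ω⁻¹ * (-(Υ a) * (∑ e, J b e * g e c) + ∑ e, DJ a b e * g e c))
    -- ξ_a = -(1/(d-1)) ∇_b Z_a{}^b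
    (ξ : Fin d → ℝ)
    (hξ : ∀ a, ξ a = -(1 / ((d : ℝ) - 1)) * ∑ b, ∑ c, DZ b a c * gInv c b) :
    -- conformal Killing–Yano equation: ∇_{(a}Z_{b)c} = g_{ab} ξ_c - g_{c(a} ξ_{b)}
    ∀ a b c, (DZ a b c + DZ b a c) / 2 =
      g a b * ξ c - (g c a * ξ b + g c b * ξ a) / 2 :=
  stmt_1_general hd g gInv J Ω Υ DJ hgsymm hginv hJ2 hcompat K hK hKahler DZ hDZ ξ hξ
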